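/- arXiv:2403.07345 — 5 statements merged into one kernel-verified Lean document; each statement's English description precedes it below -/
import Mathlib

section
/- Let X be a Banach space and A, B bounded linear operators on X. If 1 - AB is a Fredholm operator, then 1 - BA is a Fredholm operator. -/
/-!
`A` maps the fixed vectors of `BA` bijectively onto those of `AB`, with inverse `B`, and `B`
induces an isomorphism `X ⧸ Ran (1 - AB) ≃ X ⧸ Ran (1 - BA)` whose inverse is induced by `A`.
So `1 - BA` has finite-dimensional kernel and cokernel, like `1 - AB`. Its range is then closed:
if `C` is a finite-dimensional complement of the range of a bounded operator `T` between Banach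
spaces, then `(x, c) ↦ T x + c` is surjective, hence a quotient map by the open mapping theorem,
and the preimage of `Ran T` under it is the closed subspace `c = 0`.
-/

open ContinuousLinearMap

/-- `T` is a Fredholm operator: closed range, finite-dimensional kernel,
and finite-dimensional cokernel. -/
def IsFredholm {X : Type*} [NormedAddCommGroup X] [NormedSpace ℂ X]
    (T : X →L[ℂ] X) : Prop :=
  IsClosed (LinearMap.range (T : X →ₗ[ℂ] X) : Set X) ∧
  FiniteDimensional ℂ (LinearMap.ker (T : X →ₗ[ℂ] X)) ∧
  FiniteDimensional ℂ (X ⧸ LinearMap.range (T : X →ₗ[ℂ] X))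

namespace LinearMap

variable {R M N : Type*} [Ring R] [AddCommGroup M] [Module R M] [AddCommGroup N] [Module R N]
  (A : M →ₗ[R] N) (B : N →ₗ[R] M)

lemma mem_ker_id_sub_comp {x : M} : x ∈ ker (id - B ∘ₗ A) ↔ B (A x) = x := by
  rw [mem_ker, sub_apply, sub_eq_zero, eq_comm]
  rfl

lemma apply_mem_ker_id_sub_comp {x : M} (hx : x ∈ ker (id - B ∘ₗ A)) :
    A x ∈ ker (id - A ∘ₗ B) :=
  (mem_ker_id_sub_comp B A).2 (congrArg A ((mem_ker_id_sub_comp A B).1 hx))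

def kerIdSubCompEquiv : ker (id - B ∘ₗ A) ≃ₗ[R] ker (id - A ∘ₗ B) :=
  .ofLinearMap
    (A.restrict fun _ => apply_mem_ker_id_sub_comp A B)
    (B.restrict fun _ => apply_mem_ker_id_sub_comp B A)
    (by ext ⟨y, hy⟩; exact (mem_ker_id_sub_comp B A).1 hy)
    (by ext ⟨x, hx⟩; exact (mem_ker_id_sub_comp A B).1 hx)

lemma range_id_sub_comp_le_comap :
    range (id - A ∘ₗ B) ≤ (range (id - B ∘ₗ A)).comap B := by
  rintro _ ⟨y, rfl⟩
  exact ⟨B y, by simp⟩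

lemma mk_apply_apply_eq_mk (x : M) :
    (Submodule.Quotient.mk (B (A x)) : M ⧸ range (id - B ∘ₗ A)) = Submodule.Quotient.mk x :=
  ((Submodule.Quotient.eq _).2 (mem_range_self (id - B ∘ₗ A) x)).symm

def quotientRangeIdSubCompEquiv :
    (N ⧸ range (id - A ∘ₗ B)) ≃ₗ[R] M ⧸ range (id - B ∘ₗ A) :=
  .ofLinearMap
    (Submodule.mapQ _ _ B (range_id_sub_comp_le_comap A B))
    (Submodule.mapQ _ _ A (range_id_sub_comp_le_comap B A))
    (by ext x; exact mk_apply_apply_eq_mk A B x)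
    (by ext y; exact mk_apply_apply_eq_mk B A y)

end LinearMap

namespace ContinuousLinearMap

variable {𝕜 E F : Type*} [NontriviallyNormedField 𝕜] [CompleteSpace 𝕜]
  [NormedAddCommGroup E] [NormedSpace 𝕜 E] [CompleteSpace E]
  [NormedAddCommGroup F] [NormedSpace 𝕜 F] [CompleteSpace F]

theorem isClosed_range_of_finiteDimensional_quotient (T : E →L[𝕜] F)
    [FiniteDimensional 𝕜 (F ⧸ T.range)] : IsClosed (T.range : Set F) := by
  obtain ⟨C, hC⟩ := Submodule.exists_isCompl T.range
  have : FiniteDimensional 𝕜 C := (Submodule.quotientEquivOfIsCompl _ C hC).finiteDimensional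
  have : CompleteSpace C := FiniteDimensional.complete 𝕜 C
  let Φ : E × C →L[𝕜] F := T.coprod C.subtypeL
  have hΦ : Function.Surjective Φ := by
    intro y
    obtain ⟨_, ⟨x, rfl⟩, c, hc, rfl⟩ :=
      Submodule.mem_sup.1 (hC.sup_eq_top ▸ Submodule.mem_top : y ∈ T.range ⊔ C)
    exact ⟨(x, ⟨c, hc⟩), rfl⟩
  have hpre : Φ ⁻¹' T.range = {p | p.2 = 0} := by
    ext ⟨x, c⟩
    have hmem : T x + c ∈ T.range ↔ (c : F) ∈ T.range := add_mem_cancel_left ⟨x, rfl⟩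
    simp only [Set.mem_preimage, Set.mem_ofPred_eq, Φ, coprod_apply, Submodule.coe_subtypeL,
      Submodule.coe_subtype, SetLike.mem_coe, hmem]
    refine ⟨fun hc => Subtype.ext (Submodule.disjoint_def.1 hC.disjoint _ hc c.2), ?_⟩
    rintro rfl
    exact Submodule.zero_mem _
  rw [← (Φ.isQuotientMap hΦ).isClosed_preimage, hpre]
  exact isClosed_eq continuous_snd continuous_const

end ContinuousLinearMap

theorem stmt_1 (X : Type*) [NormedAddCommGroup X] [NormedSpace ℂ X] [CompleteSpace X]
    (A B : X →L[ℂ] X) (h : _root_.IsFredholm (1 - A ∘L B)) :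
    _root_.IsFredholm (1 - B ∘L A) := by
  obtain ⟨-, hker, hcoker⟩ := h
  have hAB : ((1 - A ∘L B : X →L[ℂ] X) : X →ₗ[ℂ] X) = LinearMap.id - (A : X →ₗ[ℂ] X) ∘ₗ B :=
    rfl
  rw [hAB] at hker hcoker
  have hcoker' : FiniteDimensional ℂ (X ⧸ (1 - B ∘L A).range) :=
    (LinearMap.quotientRangeIdSubCompEquiv (A : X →ₗ[ℂ] X) B).finiteDimensional
  exact ⟨(1 - B ∘L A).isClosed_range_of_finiteDimensional_quotient,
    (LinearMap.kerIdSubCompEquiv (A : X →ₗ[ℂ] X) B).symm.finiteDimensional, hcoker'⟩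
end

section
/- Let T be a bounded, self-adjoint, positivity-preserving operator on L²(m) such that r(T) is an isolated point of σ(T) with one-dimensional eigenspace spanned by a normalized a.e.-positive function φ. Then r(T) > sup{|λ| : λ ∈ σ(T), |λ| ≠ r(T)} if and only if either -r(T) < ℓ(T) or T is bipartite. -/
/-!
If `-r` is also an isolated point of the spectrum, it is an eigenvalue, and since a positivity
preserving operator commutes with taking real parts it has a real eigenfunction `ψ`. Positivity
gives `T |ψ| ≥ r |ψ|` pointwise, and pairing with the ground state `φ > 0` forces `T |ψ| = r |ψ|`,
so `|ψ|` is a nonzero multiple of `φ` and `ψ ≠ 0` a.e. Comparing `⟪|ψ|, T |ψ|⟫ = r ‖ψ‖²` with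
`⟪ψ, T ψ⟫ = -r ‖ψ‖²` gives `⟪ψ⁺, T ψ⁺⟫ = ⟪ψ⁻, T ψ⁻⟫ = 0`. Hence `T` maps functions supported
on `{ψ > 0}` to functions vanishing there (truncate by multiples of `ψ⁺` and pass to the limit),
and likewise for `{ψ < 0}`, which says exactly that `J = sign ψ` anticommutes with `T`.

Conversely, `-r < ℓ(T)` keeps the negative spectrum away from `-r`, while a `J` anticommuting
with `T` is an involution conjugating `T` to `-T`, so the spectrum is symmetric and the gap below
`r` is reflected to the negative side.
-/

open MeasureTheory Filter
open scoped ComplexOrder ENNReal Topology InnerProductSpace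

theorem Complex.lipschitzWith_ofReal_max_re_zero :
    LipschitzWith 1 fun z : ℂ => ((max z.re 0 : ℝ) : ℂ) := by
  simpa [Function.comp_def] using
    Complex.isometry_ofReal.lipschitz.comp ((RCLike.lipschitzWith_re (K := ℂ)).max_const 0)

namespace MeasureTheory.Lp

variable {α E : Type*} [MeasurableSpace α] {μ : Measure α} {p : ℝ≥0∞} [NormedAddCommGroup E]

noncomputable def posRe (f : Lp ℂ p μ) : Lp ℂ p μ :=
  Complex.lipschitzWith_ofReal_max_re_zero.compLp (by simp) f

theorem coeFn_posRe (f : Lp ℂ p μ) :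
    posRe f =ᵐ[μ] fun x => ((max (f x).re 0 : ℝ) : ℂ) :=
  Complex.lipschitzWith_ofReal_max_re_zero.coeFn_compLp _ f

theorem posRe_nonneg (f : Lp ℂ p μ) : ∀ᵐ x ∂μ, 0 ≤ posRe f x := by
  filter_upwards [coeFn_posRe f] with x hx
  simp [hx]

theorem posRe_eq_zero_of_eq_zero (f : Lp ℂ p μ) : ∀ᵐ x ∂μ, f x = 0 → posRe f x = 0 := by
  filter_upwards [coeFn_posRe f] with x hx h
  simp [hx, h]

theorem coeFn_posRe_add_posRe_neg (f : Lp ℂ p μ) :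
    posRe f + posRe (-f) =ᵐ[μ] fun x => ((|(f x).re| : ℝ) : ℂ) := by
  filter_upwards [Lp.coeFn_add (posRe f) (posRe (-f)), coeFn_posRe f, coeFn_posRe (-f),
    Lp.coeFn_neg f] with x h h₁ h₂ h₃
  rw [h, Pi.add_apply, h₁, h₂, h₃, Pi.neg_apply, Complex.neg_re, ← Complex.ofReal_add,
    max_zero_add_max_neg_zero_eq_abs_self]

theorem norm_posRe_add_posRe_neg {f : Lp ℂ p μ} (hf : ∀ᵐ x ∂μ, (f x).im = 0) :
    ‖posRe f + posRe (-f)‖ = ‖f‖ := by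
  have hnorm : ∀ᵐ x ∂μ, ‖(posRe f + posRe (-f)) x‖ = ‖f x‖ := by
    filter_upwards [coeFn_posRe_add_posRe_neg f, hf] with x h₁ h₂
    have hfx : f x = ((f x).re : ℂ) := Complex.ext rfl (by simp [h₂])
    rw [h₁]
    conv_rhs => rw [hfx]
    simp
  rw [Lp.norm_def, Lp.norm_def, eLpNorm_congr_norm_ae hnorm]

theorem coeFn_posRe_sub_smul (f g : Lp ℂ p μ) (c : ℝ) :
    posRe (f - c • g) =ᵐ[μ] fun x => ((max ((f x).re - c * (g x).re) 0 : ℝ) : ℂ) := by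
  filter_upwards [coeFn_posRe (f - c • g), Lp.coeFn_sub f (c • g), Lp.coeFn_smul c g]
    with x h₁ h₂ h₃
  rw [h₁, h₂, Pi.sub_apply, h₃, Pi.smul_apply, Complex.sub_re, Complex.real_smul,
    Complex.re_ofReal_mul]

variable [Fact (1 ≤ p)]

theorem tendsto_zero_of_dominated (hp : p ≠ ∞) {f : ℕ → Lp E p μ} {b : α → ℝ}
    (hb : MemLp b p μ) (hbound : ∀ n, ∀ᵐ x ∂μ, ‖f n x‖ ≤ b x)
    (hlim : ∀ᵐ x ∂μ, Tendsto (fun n => f n x) atTop (𝓝 0)) :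
    Tendsto f atTop (𝓝 0) := by
  have hp0 : p ≠ 0 := (lt_of_lt_of_le zero_lt_one (Fact.out : 1 ≤ p)).ne'
  have hpos : 0 < p.toReal := ENNReal.toReal_pos hp0 hp
  have hrpow : ∀ {q : ℝ}, 0 < q → Tendsto (fun a : ℝ≥0∞ => a ^ q) (𝓝 0) (𝓝 0) := fun {q} hq => by
    simpa [ENNReal.zero_rpow_of_pos hq] using
      (ENNReal.continuous_rpow_const (y := q)).tendsto 0
  have hint : Tendsto (fun n => ∫⁻ x, ‖f n x‖ₑ ^ p.toReal ∂μ) atTop (𝓝 0) := by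
    have hfin := lintegral_rpow_enorm_lt_top_of_eLpNorm_lt_top hp0 hp hb.eLpNorm_lt_top
    simpa using tendsto_lintegral_of_dominated_convergence' (f := fun _ => 0)
      (fun x => ‖b x‖ₑ ^ p.toReal)
      (fun n => (Lp.aestronglyMeasurable (f n)).enorm.pow_const _)
      (fun n => (hbound n).mono fun x hx => ENNReal.rpow_le_rpow
        (enorm_le_iff_norm_le.2 (hx.trans (Real.le_norm_self _))) hpos.le)
      hfin.ne (hlim.mono fun x hx => (hrpow hpos).comp (by simpa using hx.enorm))
  rw [tendsto_iff_norm_sub_tendsto_zero]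
  simp only [sub_zero, Lp.norm_def, eLpNorm_eq_lintegral_rpow_enorm_toReal hp0 hp]
  exact (ENNReal.tendsto_toReal ENNReal.zero_ne_top).comp
    ((hrpow (one_div_pos.2 hpos)).comp hint)

theorem tendsto_posRe_sub_smul (hp : p ≠ ∞) {w g : Lp ℂ p μ} (hw : ∀ᵐ x ∂μ, 0 ≤ w x)
    (hgw : ∀ᵐ x ∂μ, w x = 0 → g x = 0) :
    Tendsto (fun n : ℕ => posRe (g - (n : ℝ) • w)) atTop (𝓝 0) := by
  refine tendsto_zero_of_dominated hp (Lp.memLp g).norm (fun n => ?_) ?_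
  · filter_upwards [coeFn_posRe_sub_smul g w n, hw] with x hx hwx
    rw [hx, Complex.norm_real, Real.norm_of_nonneg (le_max_right _ _)]
    have hwx' := (Complex.nonneg_iff.1 hwx).1
    exact max_le (by nlinarith [Complex.re_le_norm (g x), n.cast_nonneg (α := ℝ)]) (norm_nonneg _)
  · filter_upwards [ae_all_iff.2 fun n : ℕ => coeFn_posRe_sub_smul g w n, hw, hgw]
      with x hx hwx hgwx
    have hev : ∀ᶠ n : ℕ in atTop, (g x).re ≤ n * (w x).re := by
      rcases (Complex.nonneg_iff.1 hwx).1.eq_or_lt with hb | hb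
      · simp [hgwx (Complex.ext hb.symm (Complex.nonneg_iff.1 hwx).2.symm), ← hb]
      · exact (tendsto_natCast_atTop_atTop.atTop_mul_const hb).eventually_ge_atTop _
    refine tendsto_const_nhds.congr' (hev.mono fun n hn => ?_)
    dsimp only
    rw [hx n, max_eq_right (by linarith), Complex.ofReal_zero]

variable (μ p) in
noncomputable def reCLM : Lp ℂ p μ →L[ℝ] Lp ℂ p μ :=
  (Complex.ofRealCLM.comp Complex.reCLM).compLpL p μ

theorem coeFn_reCLM (f : Lp ℂ p μ) : reCLM μ p f =ᵐ[μ] fun x => ((f x).re : ℂ) :=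
  ContinuousLinearMap.coeFn_compLpL _ f

theorem posRe_sub_posRe_neg (f : Lp ℂ p μ) : posRe f - posRe (-f) = reCLM μ p f := by
  ext1
  filter_upwards [Lp.coeFn_sub (posRe f) (posRe (-f)), coeFn_posRe f, coeFn_posRe (-f),
    Lp.coeFn_neg f, coeFn_reCLM f] with x h h₁ h₂ h₃ h₄
  rw [h, Pi.sub_apply, h₁, h₂, h₃, h₄, Pi.neg_apply, Complex.neg_re, ← Complex.ofReal_sub,
    max_zero_sub_max_neg_zero_eq_self]

theorem reCLM_eq_self {f : Lp ℂ p μ} (hf : ∀ᵐ x ∂μ, (f x).im = 0) : reCLM μ p f = f := by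
  ext1
  filter_upwards [coeFn_reCLM f, hf] with x h₁ h₂
  rw [h₁]
  exact Complex.ext (by simp) (by simp [h₂])

theorem im_reCLM (f : Lp ℂ p μ) : ∀ᵐ x ∂μ, (reCLM μ p f x).im = 0 := by
  filter_upwards [coeFn_reCLM f] with x h
  simp [h]

theorem reCLM_add_I_smul_reCLM (f : Lp ℂ p μ) :
    reCLM μ p f + Complex.I • reCLM μ p (-Complex.I • f) = f := by
  ext1
  filter_upwards [Lp.coeFn_add (reCLM μ p f) (Complex.I • reCLM μ p (-Complex.I • f)),
    Lp.coeFn_smul Complex.I (reCLM μ p (-Complex.I • f)), coeFn_reCLM f,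
    coeFn_reCLM (-Complex.I • f), Lp.coeFn_smul (-Complex.I) f] with x h₁ h₂ h₃ h₄ h₅
  rw [h₁, Pi.add_apply, h₂, Pi.smul_apply, h₃, h₄, h₅]
  apply Complex.ext <;> simp

variable (μ p) in
noncomputable def vanishingOn (A : Set α) : Submodule ℂ (Lp ℂ p μ) :=
  LinearMap.ker (LpToLpRestrictCLM α ℂ ℂ μ p A : Lp ℂ p μ →ₗ[ℂ] Lp ℂ p (μ.restrict A))

theorem isClosed_vanishingOn (A : Set α) : IsClosed (vanishingOn μ p A : Set (Lp ℂ p μ)) :=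
  ContinuousLinearMap.isClosed_ker _

theorem mem_vanishingOn {A : Set α} (hA : MeasurableSet A) {f : Lp ℂ p μ} :
    f ∈ vanishingOn μ p A ↔ ∀ᵐ x ∂μ, x ∈ A → f x = 0 := by
  have hf := LpToLpRestrictCLM_coeFn ℂ A f
  rw [vanishingOn, LinearMap.mem_ker, ContinuousLinearMap.coe_coe, Lp.eq_zero_iff_ae_eq_zero,
    ← ae_restrict_iff' hA]
  exact ⟨fun h => hf.symm.trans h, fun h => hf.trans h⟩

end MeasureTheory.Lp

namespace MeasureTheory.L2

variable {α : Type*} [MeasurableSpace α] {μ : Measure α} {f g : Lp ℂ 2 μ}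

theorem ae_inner_nonneg (hf : ∀ᵐ x ∂μ, 0 ≤ f x) (hg : ∀ᵐ x ∂μ, 0 ≤ g x) :
    ∀ᵐ x ∂μ, 0 ≤ ⟪f x, g x⟫_ℂ := by
  filter_upwards [hf, hg] with x h₁ h₂
  rw [RCLike.inner_apply']
  exact mul_nonneg (star_nonneg_iff.2 h₁) h₂

theorem inner_nonneg (hf : ∀ᵐ x ∂μ, 0 ≤ f x) (hg : ∀ᵐ x ∂μ, 0 ≤ g x) : 0 ≤ ⟪f, g⟫_ℂ := by
  rw [L2.inner_def]
  exact integral_nonneg_of_ae (ae_inner_nonneg hf hg)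

theorem ae_mul_eq_zero_of_inner_eq_zero (hf : ∀ᵐ x ∂μ, 0 ≤ f x) (hg : ∀ᵐ x ∂μ, 0 ≤ g x)
    (h : ⟪f, g⟫_ℂ = 0) : ∀ᵐ x ∂μ, f x * g x = 0 := by
  have hint := L2.integrable_inner (𝕜 := ℂ) f g
  have hre : ∫ x, (⟪f x, g x⟫_ℂ).re ∂μ = 0 := by
    rw [← RCLike.re_eq_complex_re, integral_re hint, ← L2.inner_def, h, map_zero]
  have hnonneg := ae_inner_nonneg hf hg
  have hzero := (integral_eq_zero_iff_of_nonneg_ae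
    (hnonneg.mono fun x hx => (Complex.nonneg_iff.1 hx).1) hint.re).1 hre
  filter_upwards [hzero, hnonneg, hf] with x h₁ h₂ h₃
  have hconj : starRingEnd ℂ (f x) = f x :=
    Complex.conj_eq_iff_re.2 (Complex.ext (by simp) (by simp [← (Complex.nonneg_iff.1 h₃).2]))
  rw [RCLike.inner_apply', hconj] at h₁ h₂
  exact Complex.ext h₁ (Complex.nonneg_iff.1 h₂).2.symm

end MeasureTheory.L2

theorem IsSelfAdjoint.exists_eigenvector_of_isolated {H : Type*} [NormedAddCommGroup H]
    [InnerProductSpace ℂ H] [CompleteSpace H] {T : H →L[ℂ] H} (hT : IsSelfAdjoint T) {t ε : ℝ}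
    (ht : (t : ℂ) ∈ spectrum ℂ T) (hε : 0 < ε)
    (hiso : ∀ x : ℝ, (x : ℂ) ∈ spectrum ℂ T → x ≠ t → ε ≤ |x - t|) :
    ∃ v : H, v ≠ 0 ∧ T v = (t : ℂ) • v := by
  -- `cfc f T` is the spectral projection onto the eigenspace of the isolated point `t`
  set f : ℝ → ℝ := fun x => max 0 (1 - |x - t| / ε)
  have hft : f t = 1 := by simp [f]
  have hf0 (x : ℝ) (hx : x ∈ spectrum ℝ T) (hxt : x ≠ t) : f x = 0 := by
    have := hiso x (spectrum.algebraMap_mem_iff ℂ |>.2 hx) hxt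
    exact max_eq_left (sub_nonpos.2 ((one_le_div hε).2 this))
  have hTP : T * cfc f T = (t : ℂ) • cfc f T := by
    have hcongr : cfc (fun x => x * f x) T = cfc (fun x => t * f x) T := by
      refine cfc_congr fun x hx => ?_
      by_cases hxt : x = t
      · rw [hxt]
      · rw [hf0 x hx hxt, mul_zero, mul_zero]
    rwa [cfc_mul (fun x : ℝ => x) f T, cfc_id' ℝ T, cfc_const_mul t f T, ← Complex.coe_smul]
      at hcongr
  have hP : cfc f T ≠ 0 := by
    intro h
    have h1 : (1 : ℝ) ∈ spectrum ℝ (cfc f T) := by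
      rw [cfc_map_spectrum f T]
      exact ⟨t, spectrum.algebraMap_mem_iff ℂ |>.1 ht, hft⟩
    rw [h, spectrum.mem_iff] at h1
    simp at h1
  obtain ⟨u, hu⟩ : ∃ u, cfc f T u ≠ 0 := by
    by_contra! h
    exact hP (ContinuousLinearMap.ext h)
  exact ⟨cfc f T u, hu, by rw [← mul_apply_eq_comp, hTP]; rfl⟩

theorem ContinuousLinearMap.mem_ker_smul_one_sub_iff {E : Type*} [NormedAddCommGroup E]
    [NormedSpace ℂ E] {T : E →L[ℂ] E} {c : ℂ} {v : E} :
    v ∈ LinearMap.ker ((c • 1 - T : E →L[ℂ] E) : E →ₗ[ℂ] E) ↔ T v = c • v := by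
  simp [sub_eq_zero]
  exact eq_comm

theorem ContinuousLinearMap.mem_spectrum_of_apply_eq_smul {𝕜 E : Type*}
    [NontriviallyNormedField 𝕜] [NormedAddCommGroup E] [NormedSpace 𝕜 E] {T : E →L[𝕜] E}
    {c : 𝕜} {v : E} (hv : v ≠ 0) (h : T v = c • v) : c ∈ spectrum 𝕜 T := by
  rintro ⟨u, hu⟩
  have huv : (u : E →L[𝕜] E) v = 0 := by
    rw [hu, Algebra.algebraMap_eq_smul_one, sub_apply, smul_apply, one_apply_eq_self, h, sub_self]
  apply hv
  calc v = ((u⁻¹ * u : (E →L[𝕜] E)ˣ) : E →L[𝕜] E) v := by rw [inv_mul_cancel]; rfl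
    _ = 0 := by rw [Units.val_mul, mul_apply_eq_comp, huv, map_zero]

theorem isCompact_setOf_ofReal_mem_spectrum {A : Type*} [NormedRing A] [NormedAlgebra ℂ A]
    [CompleteSpace A] (a : A) : IsCompact {x : ℝ | (x : ℂ) ∈ spectrum ℂ a} :=
  Complex.isometry_ofReal.isClosedEmbedding.isCompact_preimage (spectrum.isCompact a)

section PositivityPreserving

variable {α : Type*} [MeasurableSpace α] {μ : Measure α} {p : ℝ≥0∞} [Fact (1 ≤ p)]

def IsPositivityPreserving (T : Lp ℂ p μ →L[ℂ] Lp ℂ p μ) : Prop :=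
  ∀ g : Lp ℂ p μ, (∀ᵐ x ∂μ, 0 ≤ g x) → ∀ᵐ x ∂μ, 0 ≤ T g x

def AnticommutesWithMul (T : Lp ℂ p μ →L[ℂ] Lp ℂ p μ) (J : α → ℝ) : Prop :=
  ∀ f g : Lp ℂ p μ, (∀ᵐ x ∂μ, g x = J x • f x) → ∀ᵐ x ∂μ, J x • T f x = -(T g x)

open Lp

namespace IsPositivityPreserving

variable {T : Lp ℂ p μ →L[ℂ] Lp ℂ p μ} (hT : IsPositivityPreserving T)
include hT

theorem mono {f g : Lp ℂ p μ} (h : ∀ᵐ x ∂μ, f x ≤ g x) : ∀ᵐ x ∂μ, T f x ≤ T g x := by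
  have hpos := hT (g - f) (by
    filter_upwards [Lp.coeFn_sub g f, h] with x h₁ h₂
    rw [h₁, Pi.sub_apply]
    exact sub_nonneg.2 h₂)
  filter_upwards [hpos, map_sub T g f ▸ Lp.coeFn_sub (T g) (T f)] with x h₁ h₂
  rw [h₂, Pi.sub_apply] at h₁
  exact sub_nonneg.1 h₁

theorem im_eq_zero {f : Lp ℂ p μ} (hf : ∀ᵐ x ∂μ, (f x).im = 0) : ∀ᵐ x ∂μ, (T f x).im = 0 := by
  rw [← reCLM_eq_self hf, ← posRe_sub_posRe_neg, map_sub]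
  filter_upwards [Lp.coeFn_sub (T (posRe f)) (T (posRe (-f))), hT _ (posRe_nonneg f),
    hT _ (posRe_nonneg (-f))] with x h h₁ h₂
  rw [h, Pi.sub_apply, Complex.sub_im, ← (Complex.nonneg_iff.1 h₁).2, ← (Complex.nonneg_iff.1 h₂).2,
    sub_zero]

theorem map_reCLM (f : Lp ℂ p μ) : T (reCLM μ p f) = reCLM μ p (T f) := by
  have hTf : T f = T (reCLM μ p f) + Complex.I • T (reCLM μ p (-Complex.I • f)) := by
    rw [← map_smul, ← map_add, reCLM_add_I_smul_reCLM]
  ext1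
  filter_upwards [coeFn_reCLM (T f), hTf ▸ Lp.coeFn_add _ _,
    Lp.coeFn_smul Complex.I (T (reCLM μ p (-Complex.I • f))), hT.im_eq_zero (im_reCLM f),
    hT.im_eq_zero (im_reCLM (-Complex.I • f))] with x h₁ h₂ h₃ ha hb
  rw [h₁, h₂, Pi.add_apply, h₃, Pi.smul_apply, smul_eq_mul]
  refine Complex.ext ?_ ?_
  · simp only [Complex.ofReal_re, Complex.add_re, Complex.mul_re, Complex.I_re, Complex.I_im, hb]
    ring
  · simp only [Complex.ofReal_im, ha]

theorem exists_real_eigenvector {v : Lp ℂ p μ} (hv : v ≠ 0) {t : ℝ} (hTv : T v = (t : ℂ) • v) :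
    ∃ ψ : Lp ℂ p μ, ψ ≠ 0 ∧ (∀ᵐ x ∂μ, (ψ x).im = 0) ∧ T ψ = (t : ℂ) • ψ := by
  have heigen (c : ℂ) : T (reCLM μ p (c • v)) = (t : ℂ) • reCLM μ p (c • v) := by
    rw [hT.map_reCLM, map_smul, hTv, smul_comm, Complex.coe_smul, Complex.coe_smul, map_smul]
    rfl
  by_cases h₁ : reCLM μ p ((1 : ℂ) • v) = 0
  · refine ⟨reCLM μ p (-Complex.I • v), fun h₂ => hv ?_, im_reCLM _, heigen _⟩
    rw [← reCLM_add_I_smul_reCLM v, ← one_smul ℂ v, h₁, one_smul, h₂, smul_zero, add_zero]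
  · exact ⟨_, h₁, im_reCLM _, heigen 1⟩

theorem smul_le_map_posRe_add_posRe_neg {r : ℝ} (hr : 0 ≤ r) {ψ : Lp ℂ p μ}
    (hψre : ∀ᵐ x ∂μ, (ψ x).im = 0) (hTψ : T ψ = ((-r : ℝ) : ℂ) • ψ) :
    ∀ᵐ x ∂μ, ((r : ℂ) • (posRe ψ + posRe (-ψ))) x ≤ T (posRe ψ + posRe (-ψ)) x := by
  have hψ : ∀ᵐ x ∂μ, ψ x = ((ψ x).re : ℂ) := hψre.mono fun x hx => Complex.ext rfl (by simp [hx])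
  have habs := coeFn_posRe_add_posRe_neg ψ
  have h₁ := hT.mono (f := ψ) (g := posRe ψ + posRe (-ψ)) (by
    filter_upwards [hψ, habs] with x h₁ h₂
    rw [h₁, h₂, Complex.real_le_real]
    exact le_abs_self _)
  have h₂ := hT.mono (f := -ψ) (g := posRe ψ + posRe (-ψ)) (by
    filter_upwards [hψ, habs, Lp.coeFn_neg ψ] with x h₁ h₂ h₃
    rw [h₃, Pi.neg_apply, h₁, h₂, ← Complex.ofReal_neg, Complex.real_le_real]
    exact neg_le_abs _)
  filter_upwards [h₁, h₂, hψ, habs, hTψ ▸ Lp.coeFn_smul ((-r : ℝ) : ℂ) ψ,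
    map_neg T ψ ▸ Lp.coeFn_neg (T ψ), Lp.coeFn_smul (r : ℂ) (posRe ψ + posRe (-ψ))]
    with x h₁ h₂ hψx habsx hTψx hTψx' hx
  rw [hTψx', Pi.neg_apply, hTψx, Pi.smul_apply, hψx] at h₂
  rw [hTψx, Pi.smul_apply, hψx] at h₁
  rw [hx, Pi.smul_apply, habsx]
  rw [smul_eq_mul, ← Complex.ofReal_mul] at h₁ h₂ ⊢
  rw [Complex.le_def] at h₁ h₂ ⊢
  simp only [Complex.neg_re, Complex.ofReal_re, Complex.ofReal_im, Complex.neg_im] at h₁ h₂ ⊢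
  refine ⟨?_, by linarith [h₁.2]⟩
  rw [← abs_of_nonneg hr, ← abs_mul]
  exact abs_le.2 ⟨by linarith [h₂.1], by linarith [h₁.1]⟩

theorem map_mem_vanishingOn_of_nonneg (hp : p ≠ ∞) {A : Set α} (hA : MeasurableSet A)
    {w g : Lp ℂ p μ} (hw : ∀ᵐ x ∂μ, 0 ≤ w x) (hTw : T w ∈ vanishingOn μ p A)
    (hg : ∀ᵐ x ∂μ, 0 ≤ g x) (hgw : ∀ᵐ x ∂μ, w x = 0 → g x = 0) :
    T g ∈ vanishingOn μ p A := by
  -- `g - e n` is the truncation `min g (n w)`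
  set e : ℕ → Lp ℂ p μ := fun n => posRe (g - (n : ℝ) • w)
  have hmem (n : ℕ) : T (g - e n) ∈ vanishingOn μ p A := by
    have hbounds : ∀ᵐ x ∂μ, 0 ≤ (g - e n) x ∧ (g - e n) x ≤ ((n : ℝ) • w) x := by
      filter_upwards [coeFn_posRe_sub_smul g w n, Lp.coeFn_sub g (e n),
        Lp.coeFn_smul (n : ℝ) w, hg, hw] with x he h₁ h₂ hgx hwx
      obtain ⟨a, ha, hax⟩ : ∃ a : ℝ, 0 ≤ a ∧ (a : ℂ) = g x := RCLike.nonneg_iff_exists_ofReal.1 hgx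
      obtain ⟨b, hb, hbx⟩ : ∃ b : ℝ, 0 ≤ b ∧ (b : ℂ) = w x := RCLike.nonneg_iff_exists_ofReal.1 hwx
      rw [h₁, h₂, Pi.sub_apply, Pi.smul_apply, he, ← hax, ← hbx]
      simp only [Complex.ofReal_re, Complex.real_smul, ← Complex.ofReal_sub, ← Complex.ofReal_mul,
        Complex.real_le_real, Complex.zero_le_real]
      constructor
      · exact sub_nonneg.2 (max_le (by nlinarith) ha)
      · linarith [le_max_left (a - n * b) 0]
    rw [mem_vanishingOn hA] at hTw ⊢
    filter_upwards [hT _ (hbounds.mono fun x hx => hx.1), hT.mono (hbounds.mono fun x hx => hx.2),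
      hTw, Lp.coeFn_smul (n : ℝ) (T w)] with x h₀ h₁ h₂ h₃ hx
    rw [T.map_smul_of_tower, h₃, Pi.smul_apply, h₂ hx, smul_zero] at h₁
    exact le_antisymm h₁ h₀
  have hTlim : Tendsto (fun n => T (g - e n)) atTop (𝓝 (T g)) := by
    have := tendsto_const_nhds (x := g) |>.sub (tendsto_posRe_sub_smul hp hw hgw)
    rw [sub_zero] at this
    exact (T.continuous.tendsto g).comp this
  exact (isClosed_vanishingOn A).mem_of_tendsto hTlim (Eventually.of_forall hmem)

theorem map_mem_vanishingOn (hp : p ≠ ∞) {A : Set α} (hA : MeasurableSet A)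
    {w f : Lp ℂ p μ} (hw : ∀ᵐ x ∂μ, 0 ≤ w x) (hTw : T w ∈ vanishingOn μ p A)
    (hfw : ∀ᵐ x ∂μ, w x = 0 → f x = 0) :
    T f ∈ vanishingOn μ p A := by
  have hpos (c : ℂ) : T (posRe (c • f)) ∈ vanishingOn μ p A := by
    refine hT.map_mem_vanishingOn_of_nonneg hp hA hw hTw (posRe_nonneg _) ?_
    filter_upwards [hfw, posRe_eq_zero_of_eq_zero (c • f), Lp.coeFn_smul c f] with x h₁ h₂ h₃ hx
    exact h₂ (by rw [h₃, Pi.smul_apply, h₁ hx, smul_zero])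
  have hre (c : ℂ) : T (reCLM μ p (c • f)) ∈ vanishingOn μ p A := by
    rw [← posRe_sub_posRe_neg, map_sub, ← neg_smul]
    exact sub_mem (hpos c) (hpos (-c))
  rw [← reCLM_add_I_smul_reCLM f, map_add, map_smul, ← one_smul ℂ f]
  exact add_mem (hre 1) (Submodule.smul_mem _ _ (by simpa using hre (-Complex.I)))

end IsPositivityPreserving

theorem AnticommutesWithMul.neg_mem_spectrum {T : Lp ℂ p μ →L[ℂ] Lp ℂ p μ} {J : α → ℝ}
    (hT : AnticommutesWithMul T J) (hJm : Measurable J) (hJ : ∀ x, J x = 1 ∨ J x = -1) {z : ℂ}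
    (hz : z ∈ spectrum ℂ T) : -z ∈ spectrum ℂ T := by
  have hJ1 (x : α) : J x * J x = 1 := by rcases hJ x with h | h <;> simp [h]
  have hJmem : MemLp (fun x => (J x : ℂ)) ∞ μ :=
    memLp_top_of_bound (Complex.measurable_ofReal.comp hJm).aestronglyMeasurable 1
      (ae_of_all _ fun x => by rcases hJ x with h | h <;> simp [h])
  -- `U` is multiplication by `J`
  set U : Lp ℂ p μ →L[ℂ] Lp ℂ p μ := (ContinuousLinearMap.mul ℂ ℂ).holderL μ ∞ p p (hJmem.toLp _)
  have hU (f : Lp ℂ p μ) : ∀ᵐ x ∂μ, U f x = J x • f x := by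
    filter_upwards [ContinuousLinearMap.coeFn_holder (r := p) (ContinuousLinearMap.mul ℂ ℂ)
      (hJmem.toLp _) f, hJmem.coeFn_toLp] with x h₁ h₂
    rw [Complex.real_smul, ← h₂]
    exact h₁
  have hUU : U * U = 1 := by
    ext1 f
    ext1
    filter_upwards [hU (U f), hU f] with x h₁ h₂
    rw [mul_apply_eq_comp, h₁, h₂, smul_smul, hJ1, one_smul]
    rfl
  have hUTU : U * -T * U = T := by
    ext1 f
    ext1
    filter_upwards [hU (-T (U f)), hT f (U f) (hU f), Lp.coeFn_neg (T (U f))] with x h₁ h₂ h₃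
    rw [mul_apply_eq_comp, mul_apply_eq_comp, neg_apply, h₁, h₃, Pi.neg_apply, ← h₂, smul_smul,
      hJ1, one_smul]
  have hconj := spectrum.units_conjugate (R := ℂ) (a := -T) (u := ⟨U, U, hUU, hUU⟩)
  rw [Units.inv_mk, Units.val_mk, hUTU, ← spectrum.neg_eq] at hconj
  rw [hconj, Set.neg_mem_neg]
  exact hz

theorem IsSelfAdjoint.apply_eq_smul_of_smul_le {T : Lp ℂ 2 μ →L[ℂ] Lp ℂ 2 μ}
    (hT : IsSelfAdjoint T) {φ ω : Lp ℂ 2 μ} {r : ℝ} (hφ : ∀ᵐ x ∂μ, 0 < φ x)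
    (hTφ : T φ = (r : ℂ) • φ) (hle : ∀ᵐ x ∂μ, ((r : ℂ) • ω) x ≤ T ω x) :
    T ω = (r : ℂ) • ω := by
  have hd : ∀ᵐ x ∂μ, 0 ≤ (T ω - (r : ℂ) • ω) x := by
    filter_upwards [Lp.coeFn_sub (T ω) ((r : ℂ) • ω), hle] with x h₁ h₂
    rw [h₁, Pi.sub_apply]
    exact sub_nonneg.2 h₂
  have hinner : ⟪φ, T ω - (r : ℂ) • ω⟫_ℂ = 0 := by
    rw [inner_sub_right, ← ContinuousLinearMap.adjoint_inner_left, hT.adjoint_eq, hTφ,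
      inner_smul_left, inner_smul_right, Complex.conj_ofReal, sub_self]
  have hzero := L2.ae_mul_eq_zero_of_inner_eq_zero (hφ.mono fun x hx => hx.le) hd hinner
  refine sub_eq_zero.1 (Lp.eq_zero_iff_ae_eq_zero.2 ?_)
  filter_upwards [hzero, hφ] with x h₁ h₂
  exact (mul_eq_zero.1 h₁).resolve_left h₂.ne'

theorem IsPositivityPreserving.apply_eq_zero_of_inner_eq_zero {T : Lp ℂ 2 μ →L[ℂ] Lp ℂ 2 μ}
    (hT : IsPositivityPreserving T) {w f : Lp ℂ 2 μ} (hw : ∀ᵐ x ∂μ, 0 ≤ w x)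
    (hwTw : ⟪w, T w⟫_ℂ = 0) (hfw : ∀ᵐ x ∂μ, w x = 0 → f x = 0) :
    ∀ᵐ x ∂μ, w x ≠ 0 → T f x = 0 := by
  have hA : MeasurableSet {x | w x ≠ 0} :=
    (Lp.stronglyMeasurable w).measurable (measurableSet_singleton 0).compl
  have hTw : T w ∈ vanishingOn μ 2 {x | w x ≠ 0} := by
    rw [mem_vanishingOn hA]
    filter_upwards [L2.ae_mul_eq_zero_of_inner_eq_zero hw (hT w hw) hwTw] with x hx hwx
    exact (mul_eq_zero.1 hx).resolve_left hwx
  exact (mem_vanishingOn hA).1 (hT.map_mem_vanishingOn ENNReal.ofNat_ne_top hA hw hTw hfw)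

theorem IsPositivityPreserving.exists_anticommutesWithMul {T : Lp ℂ 2 μ →L[ℂ] Lp ℂ 2 μ}
    (hT : IsPositivityPreserving T) {P N : Lp ℂ 2 μ} (hP : ∀ᵐ x ∂μ, 0 ≤ P x)
    (hN : ∀ᵐ x ∂μ, 0 ≤ N x) (hPT : ⟪P, T P⟫_ℂ = 0) (hNT : ⟪N, T N⟫_ℂ = 0)
    (hPN : ∀ᵐ x ∂μ, P x ≠ 0 ∨ N x ≠ 0) :
    ∃ J : α → ℝ, Measurable J ∧ (∀ x, J x = 1 ∨ J x = -1) ∧ AnticommutesWithMul T J := by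
  classical
  have hA : MeasurableSet {x | P x = 0} :=
    (Lp.stronglyMeasurable P).measurable (measurableSet_singleton 0)
  refine ⟨fun x => if P x = 0 then -1 else 1, Measurable.ite hA measurable_const measurable_const,
    fun x => by dsimp only; split_ifs <;> simp, fun f g hg => ?_⟩
  -- split `f` into its parts on `{P ≠ 0}` and on `{P = 0}`
  set fP := (2 : ℂ)⁻¹ • (f + g)
  set fN := (2 : ℂ)⁻¹ • (f - g)
  have hfP : ∀ᵐ x ∂μ, P x = 0 → fP x = 0 := by
    filter_upwards [Lp.coeFn_smul (2 : ℂ)⁻¹ (f + g), Lp.coeFn_add f g, hg] with x h₁ h₂ h₃ hx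
    rw [h₁, Pi.smul_apply, h₂, Pi.add_apply, h₃]
    simp [hx]
  have hfN : ∀ᵐ x ∂μ, N x = 0 → fN x = 0 := by
    filter_upwards [Lp.coeFn_smul (2 : ℂ)⁻¹ (f - g), Lp.coeFn_sub f g, hg, hPN]
      with x h₁ h₂ h₃ h₄ hx
    rw [h₁, Pi.smul_apply, h₂, Pi.sub_apply, h₃]
    simp [h₄.resolve_right (not_not.2 hx)]
  have hTf : T f = T fP + T fN := by
    rw [← map_add]; congr 1; simp only [fP, fN]; module
  have hTg : T g = T fP - T fN := by
    rw [← map_sub]; congr 1; simp only [fP, fN]; module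
  filter_upwards [hT.apply_eq_zero_of_inner_eq_zero hP hPT hfP,
    hT.apply_eq_zero_of_inner_eq_zero hN hNT hfN, hPN, hTf ▸ Lp.coeFn_add (T fP) (T fN),
    hTg ▸ Lp.coeFn_sub (T fP) (T fN)] with x h₁ h₂ h₃ h₄ h₅
  rw [h₄, h₅, Pi.add_apply, Pi.sub_apply]
  by_cases hx : P x = 0
  · simp [hx, h₂ (h₃.resolve_left (not_not.2 hx))]
  · simp [hx, h₁ hx]

theorem IsPositivityPreserving.exists_anticommutesWithMul_of_neg_eigenvector
    {T : Lp ℂ 2 μ →L[ℂ] Lp ℂ 2 μ} (hT : IsPositivityPreserving T) (hsa : IsSelfAdjoint T)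
    {r : ℝ} (hr : 0 ≤ r) {φ : Lp ℂ 2 μ} (hφ : ∀ᵐ x ∂μ, 0 < φ x)
    (hker : LinearMap.ker (((r : ℂ) • 1 - T : Lp ℂ 2 μ →L[ℂ] Lp ℂ 2 μ) : Lp ℂ 2 μ →ₗ[ℂ] Lp ℂ 2 μ) =
      Submodule.span ℂ {φ})
    {ψ : Lp ℂ 2 μ} (hψ : ψ ≠ 0) (hψre : ∀ᵐ x ∂μ, (ψ x).im = 0)
    (hTψ : T ψ = ((-r : ℝ) : ℂ) • ψ) :
    ∃ J : α → ℝ, Measurable J ∧ (∀ x, J x = 1 ∨ J x = -1) ∧ AnticommutesWithMul T J := by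
  have hTφ : T φ = (r : ℂ) • φ :=
    ContinuousLinearMap.mem_ker_smul_one_sub_iff.1 (hker ▸ Submodule.mem_span_singleton_self φ)
  set P := posRe ψ
  set N := posRe (-ψ)
  set ω := P + N
  have hP := posRe_nonneg ψ
  have hN := posRe_nonneg (-ψ)
  have hψPN : P - N = ψ := (posRe_sub_posRe_neg ψ).trans (reCLM_eq_self hψre)
  have hnorm : ‖ω‖ = ‖ψ‖ := norm_posRe_add_posRe_neg hψre
  have hle := hT.smul_le_map_posRe_add_posRe_neg hr hψre hTψ
  have hTω : T ω = (r : ℂ) • ω := hsa.apply_eq_smul_of_smul_le hφ hTφ hle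
  have hPN : ∀ᵐ x ∂μ, P x ≠ 0 ∨ N x ≠ 0 := by
    obtain ⟨c, hc⟩ := Submodule.mem_span_singleton.1
      (hker ▸ ContinuousLinearMap.mem_ker_smul_one_sub_iff.2 hTω)
    have hc0 : c ≠ 0 := by
      rintro rfl
      rw [zero_smul] at hc
      exact hψ (norm_eq_zero.1 (by rw [← hnorm, ← hc, _root_.norm_zero]))
    filter_upwards [hc ▸ Lp.coeFn_smul c φ, hφ, Lp.coeFn_add P N] with x h₁ h₂ h₃
    by_contra! h
    have hωx : ω x = 0 := by rw [h₃, Pi.add_apply, h.1, h.2, add_zero]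
    rw [h₁, Pi.smul_apply, smul_eq_mul] at hωx
    exact mul_ne_zero hc0 h₂.ne' hωx
  have hsum : ⟪P, T P⟫_ℂ + ⟪N, T N⟫_ℂ = 0 := by
    have hωω : ⟪ω, T ω⟫_ℂ = r * ⟪ψ, ψ⟫_ℂ := by
      rw [hTω, inner_smul_right, inner_self_eq_norm_sq_to_K, inner_self_eq_norm_sq_to_K, hnorm]
    have hψψ : ⟪ψ, T ψ⟫_ℂ = -r * ⟪ψ, ψ⟫_ℂ := by
      rw [hTψ, inner_smul_right, Complex.ofReal_neg]
    have hexp : ⟪ω, T ω⟫_ℂ + ⟪ψ, T ψ⟫_ℂ = 2 * (⟪P, T P⟫_ℂ + ⟪N, T N⟫_ℂ) := by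
      rw [← hψPN]
      simp only [ω, map_add, map_sub, inner_add_left, inner_add_right, inner_sub_left,
        inner_sub_right]
      ring
    have h2 : (2 : ℂ) * (⟪P, T P⟫_ℂ + ⟪N, T N⟫_ℂ) = 0 := by
      rw [← hexp, hωω, hψψ]
      ring
    simpa using h2
  obtain ⟨hPT, hNT⟩ := (add_eq_zero_iff_of_nonneg (L2.inner_nonneg hP (hT P hP))
    (L2.inner_nonneg hN (hT N hN))).1 hsum
  exact hT.exists_anticommutesWithMul hP hN hPT hNT hPN

end PositivityPreserving

section RealSets

variable {s : Set ℝ} {r : ℝ}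

theorem sSup_abs_ne_nonneg : 0 ≤ sSup {y | ∃ x ∈ s, y = |x| ∧ |x| ≠ r} :=
  Real.sSup_nonneg <| by rintro _ ⟨x, -, rfl, -⟩; exact abs_nonneg x

theorem neg_mem_of_sSup_abs_ne_lt (hs : IsCompact s) (hr : r ∈ s)
    (h : sSup {y | ∃ x ∈ s, y = |x| ∧ |x| ≠ r} < r) (hl : sInf s ≤ -r) :
    -r ∈ s ∧ ∃ ε > 0, ∀ x ∈ s, x ≠ -r → ε ≤ |x - -r| := by
  set m := sSup {y | ∃ x ∈ s, y = |x| ∧ |x| ≠ r}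
  have hbdd : BddAbove {y | ∃ x ∈ s, y = |x| ∧ |x| ≠ r} :=
    (hs.image continuous_abs).bddAbove.mono <| by rintro _ ⟨x, hx, rfl, -⟩; exact ⟨x, hx, rfl⟩
  have hle (x : ℝ) (hx : x ∈ s) (hxr : |x| ≠ r) : |x| ≤ m := le_csSup hbdd ⟨x, hx, rfl, hxr⟩
  have hm : 0 ≤ m := sSup_abs_ne_nonneg
  have hinf := hs.sInf_mem ⟨r, hr⟩
  have hneg : sInf s = -r := by
    refine le_antisymm hl (not_lt.1 fun hlt => ?_)
    have := hle _ hinf (by rw [abs_of_neg (by linarith)]; intro h; linarith)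
    rw [abs_of_neg (by linarith)] at this
    linarith
  refine ⟨hneg ▸ hinf, r - m, by linarith, fun x hx hxr => ?_⟩
  rw [sub_neg_eq_add]
  by_cases hxa : |x| = r
  · rcases abs_eq (by linarith) |>.1 hxa with rfl | rfl
    · rw [abs_of_pos (by linarith)]; linarith
    · exact absurd rfl hxr
  · have := hle x hx hxa
    rw [abs_le] at this
    exact (by linarith : r - m ≤ x + r).trans (le_abs_self _)

theorem sSup_abs_ne_lt {b : ℝ} (hs : BddAbove s) (hr : 0 < r) (hgap : sSup {x ∈ s | x ≠ r} < r)
    (hb : b < r) (hneg : ∀ x ∈ s, x < 0 → -x ≠ r → -x ≤ b) :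
    sSup {y | ∃ x ∈ s, y = |x| ∧ |x| ≠ r} < r := by
  refine lt_of_le_of_lt (Real.sSup_le ?_ (le_max_right _ 0)) (max_lt (max_lt hgap hb) hr)
  rintro _ ⟨x, hx, rfl, hxr⟩
  rcases le_or_gt 0 x with h | h
  · rw [abs_of_nonneg h] at hxr ⊢
    exact le_max_of_le_left (le_max_of_le_left (le_csSup (hs.mono (Set.sep_subset _ _)) ⟨hx, hxr⟩))
  · rw [abs_of_neg h] at hxr ⊢
    exact le_max_of_le_left (le_max_of_le_right (hneg x hx h hxr))

theorem sSup_abs_ne_lt_of_lt_sInf (hr : IsGreatest s r) (hs : BddBelow s)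
    (hgap : sSup {x ∈ s | x ≠ r} < r) (hl : -r < sInf s) :
    sSup {y | ∃ x ∈ s, y = |x| ∧ |x| ≠ r} < r := by
  have hmin (x : ℝ) (hx : x ∈ s) : sInf s ≤ x := csInf_le hs hx
  exact sSup_abs_ne_lt hr.bddAbove (by linarith [hmin r hr.1]) hgap (by linarith)
    fun x hx _ _ => neg_le_neg (hmin x hx)

theorem sSup_abs_ne_lt_of_neg_mem (hr : IsGreatest s r) (hgap : sSup {x ∈ s | x ≠ r} < r)
    (hneg : ∀ x ∈ s, -x ∈ s) :
    sSup {y | ∃ x ∈ s, y = |x| ∧ |x| ≠ r} < r := by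
  have hr0 : 0 < r := by
    by_contra! hr0
    -- then `s ⊆ {0}` and `r = 0`, so the gap condition reads `sSup ∅ < 0`
    have hempty : {x ∈ s | x ≠ r} = ∅ := by
      refine Set.eq_empty_of_forall_notMem fun x ⟨hx, hxr⟩ => hxr ?_
      linarith [hr.2 hx, hr.2 (hneg x hx), hr.2 (hneg r hr.1)]
    rw [hempty, Real.sSup_empty] at hgap
    linarith
  exact sSup_abs_ne_lt hr.bddAbove hr0 hgap hgap fun x hx _ hxr =>
    le_csSup (hr.bddAbove.mono (Set.sep_subset _ _)) ⟨hneg x hx, hxr⟩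

end RealSets

theorem stmt_6_general {S : Type*} [MeasurableSpace S] (m : Measure S)
    (T : Lp ℂ 2 m →L[ℂ] Lp ℂ 2 m) (hsa : IsSelfAdjoint T)
    (hpos : ∀ g : Lp ℂ 2 m, (∀ᵐ x ∂m, 0 ≤ g x) → ∀ᵐ x ∂m, 0 ≤ T g x)
    (Sp : Set ℝ) (hSp : Sp = {x : ℝ | (x : ℂ) ∈ spectrum ℂ T})
    (r l : ℝ) (hr : r = sSup Sp) (hl : l = sInf Sp)
    (hgap : sSup {x ∈ Sp | x ≠ r} < r)
    (φ : Lp ℂ 2 m) (hφnorm : ‖φ‖ = 1) (hφpos : ∀ᵐ x ∂m, 0 < φ x)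
    (hker : LinearMap.ker (((r : ℂ) • (1 : Lp ℂ 2 m →L[ℂ] Lp ℂ 2 m) - T : Lp ℂ 2 m →L[ℂ] Lp ℂ 2 m) : Lp ℂ 2 m →ₗ[ℂ] Lp ℂ 2 m) =
      Submodule.span ℂ {φ}) :
    sSup {y : ℝ | ∃ x ∈ Sp, y = |x| ∧ |x| ≠ r} < r ↔
      (-r < l ∨
        ∃ J : S → ℝ, Measurable J ∧ (∀ x, J x = 1 ∨ J x = -1) ∧
          ∀ f g : Lp ℂ 2 m, (∀ᵐ x ∂m, g x = J x • f x) →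
            ∀ᵐ x ∂m, J x • T f x = -(T g x)) := by
  have hT : IsPositivityPreserving T := hpos
  have hTφ : T φ = (r : ℂ) • φ :=
    ContinuousLinearMap.mem_ker_smul_one_sub_iff.1 (hker ▸ Submodule.mem_span_singleton_self φ)
  have hφ : φ ≠ 0 := by
    rintro rfl
    simp at hφnorm
  have hSpc : IsCompact Sp := hSp ▸ isCompact_setOf_ofReal_mem_spectrum T
  have hrmax : IsGreatest Sp r :=
    ⟨hSp ▸ ContinuousLinearMap.mem_spectrum_of_apply_eq_smul hφ hTφ,
      fun x hx => hr ▸ le_csSup hSpc.bddAbove hx⟩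
  constructor
  · intro habs
    refine or_iff_not_imp_left.2 fun hlr => ?_
    obtain ⟨hneg, ε, hε, hiso⟩ := neg_mem_of_sSup_abs_ne_lt hSpc hrmax.1 habs (hl ▸ not_lt.1 hlr)
    rw [hSp] at hneg hiso
    obtain ⟨v, hv, hTv⟩ := hsa.exists_eigenvector_of_isolated hneg hε hiso
    obtain ⟨ψ, hψ, hψre, hTψ⟩ := hT.exists_real_eigenvector hv hTv
    exact hT.exists_anticommutesWithMul_of_neg_eigenvector hsa (sSup_abs_ne_nonneg.trans_lt habs).le
      hφpos hker hψ hψre hTψ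
  · rintro (hlr | ⟨J, hJm, hJ, hTJ⟩)
    · exact sSup_abs_ne_lt_of_lt_sInf hrmax hSpc.bddBelow hgap (hl ▸ hlr)
    · refine sSup_abs_ne_lt_of_neg_mem hrmax hgap fun x hx => ?_
      rw [hSp] at hx ⊢
      simpa using AnticommutesWithMul.neg_mem_spectrum hTJ hJm hJ hx

theorem stmt_6 {S : Type*} [MeasurableSpace S] (m : Measure S) [SigmaFinite m]
    (T : Lp ℂ 2 m →L[ℂ] Lp ℂ 2 m) (hsa : IsSelfAdjoint T)
    (hpos : ∀ g : Lp ℂ 2 m, (∀ᵐ x ∂m, 0 ≤ g x) → ∀ᵐ x ∂m, 0 ≤ T g x)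
    (Sp : Set ℝ) (hSp : Sp = {x : ℝ | (x : ℂ) ∈ spectrum ℂ T})
    (r l : ℝ) (hr : r = sSup Sp) (hl : l = sInf Sp)
    (hgap : sSup {x ∈ Sp | x ≠ r} < r)
    (φ : Lp ℂ 2 m) (hφnorm : ‖φ‖ = 1) (hφpos : ∀ᵐ x ∂m, 0 < φ x)
    (hker : LinearMap.ker (((r : ℂ) • (1 : Lp ℂ 2 m →L[ℂ] Lp ℂ 2 m) - T : Lp ℂ 2 m →L[ℂ] Lp ℂ 2 m) : Lp ℂ 2 m →ₗ[ℂ] Lp ℂ 2 m) =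
      Submodule.span ℂ {φ}) :
    sSup {y : ℝ | ∃ x ∈ Sp, y = |x| ∧ |x| ≠ r} < r ↔
      (-r < l ∨
        ∃ J : S → ℝ, Measurable J ∧ (∀ x, J x = 1 ∨ J x = -1) ∧
          ∀ f g : Lp ℂ 2 m, (∀ᵐ x ∂m, g x = J x • f x) →
            ∀ᵐ x ∂m, J x • T f x = -(T g x)) :=
  stmt_6_general m T hsa hpos Sp hSp r l hr hl hgap φ hφnorm hφpos hker
end

section
/- Let V: ℤᵈ → [0,∞) be bounded and suppose min{|x-y| : x,y ∈ supp V, x ≠ y, |x| ≥ r, |y| ≥ r} → ∞ as r → ∞. Then for every ε > 0, a_ε(x) := Σ_{y ≠ x} √(V(x)V(y)) exp(-ε|x-y|) → 0 as |x| → ∞. -/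
/-!
Fix a separation `T ≥ 0` and let `r` be the sparseness radius for `T`. Once `|x| ≥ r + T`, every
support point `y ≠ x` lies at distance at least `T` from `x`: by sparseness if `|y| ≥ r`, and by
the triangle inequality otherwise. Splitting `e^{-ε|x-y|} ≤ e^{-εT/2} e^{-ε|x-y|/2}` and bounding
`√(V x V y) ≤ M` then gives `a_ε(x) ≤ M e^{-εT/2} ∑_z e^{-ε|z|/2}`, which tends to `0` as `T → ∞`.
-/

/-- The ℓ¹ norm on `ℤᵈ`. -/
def znorm {d : ℕ} (x : Fin d → ℤ) : ℝ := ∑ i, |(x i : ℝ)|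

open Real Filter Topology

lemma znorm_sub_le {d : ℕ} (x y : Fin d → ℤ) : znorm x - znorm y ≤ znorm (x - y) := by
  have h : znorm x ≤ znorm (x - y) + znorm y := by
    unfold znorm
    rw [← Finset.sum_add_distrib]
    refine Finset.sum_le_sum fun i _ => ?_
    simpa using abs_add_le ((x i : ℝ) - y i) (y i)
  linarith

lemma summable_exp_neg_mul_abs_int {c : ℝ} (hc : 0 < c) :
    Summable fun k : ℤ => exp (-c * |(k : ℝ)|) := by
  have hnat : Summable fun n : ℕ => exp (-c * n) := by
    simpa only [mul_comm] using summable_exp_nat_mul_iff.mpr (neg_neg_of_pos hc)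
  exact .of_nat_of_neg (by simpa using hnat) (by simpa using hnat)

lemma summable_exp_neg_mul_znorm {c : ℝ} (hc : 0 < c) :
    ∀ d : ℕ, Summable fun z : Fin d → ℤ => exp (-c * znorm z)
  | 0 => .of_finite
  | n + 1 => by
    rw [← (Fin.consEquiv fun _ : Fin (n + 1) => ℤ).summable_iff]
    refine ((summable_exp_neg_mul_abs_int hc).mul_of_nonneg (summable_exp_neg_mul_znorm hc n)
      (fun _ => (exp_pos _).le) (fun _ => (exp_pos _).le)).congr fun p => ?_
    simp [znorm, Fin.sum_univ_succ, mul_add, exp_add]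

lemma hasSum_exp_neg_mul_znorm_sub {c : ℝ} (hc : 0 < c) {d : ℕ} (x : Fin d → ℤ) :
    HasSum (fun y => exp (-c * znorm (x - y))) (∑' z : Fin d → ℤ, exp (-c * znorm z)) :=
  (Equiv.subLeft x).hasSum_iff.mpr (summable_exp_neg_mul_znorm hc d).hasSum

lemma le_znorm_sub_of_sparse {d : ℕ} {V : (Fin d → ℤ) → ℝ} {r T : ℝ}
    (hr : ∀ x y : Fin d → ℤ,
      V x ≠ 0 → V y ≠ 0 → x ≠ y → r ≤ znorm x → r ≤ znorm y → T ≤ znorm (x - y))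
    (hT : 0 ≤ T) {x y : Fin d → ℤ} (hx : r + T ≤ znorm x) (hVx : V x ≠ 0) (hVy : V y ≠ 0)
    (hyx : y ≠ x) : T ≤ znorm (x - y) := by
  by_cases hy : r ≤ znorm y
  · exact hr x y hVx hVy hyx.symm (by linarith) hy
  · linarith [znorm_sub_le x y]

lemma ite_sqrt_mul_exp_le {d : ℕ} {V : (Fin d → ℤ) → ℝ} {M ε T : ℝ} (hV : ∀ x, 0 ≤ V x)
    (hM : ∀ x, V x ≤ M) (hε : 0 ≤ ε) {x : Fin d → ℤ}
    (hsep : ∀ y, y ≠ x → V x ≠ 0 → V y ≠ 0 → T ≤ znorm (x - y)) (y : Fin d → ℤ) :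
    (if y = x then 0 else √(V x * V y) * exp (-ε * znorm (x - y)))
      ≤ M * exp (-(ε / 2) * T) * exp (-(ε / 2) * znorm (x - y)) := by
  have hM0 : 0 ≤ M := (hV x).trans (hM x)
  split_ifs with hyx
  · positivity
  rcases eq_or_ne (V x) 0 with hVx | hVx
  · simp only [hVx, zero_mul, sqrt_zero]
    positivity
  rcases eq_or_ne (V y) 0 with hVy | hVy
  · simp only [hVy, mul_zero, sqrt_zero, zero_mul]
    positivity
  have hsqrt : √(V x * V y) ≤ M :=
    sqrt_le_iff.mpr ⟨hM0, by nlinarith [hV x, hV y, hM x, hM y]⟩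
  have hexp : exp (-ε * znorm (x - y)) ≤ exp (-(ε / 2) * T) * exp (-(ε / 2) * znorm (x - y)) := by
    rw [← exp_add]
    exact exp_le_exp.mpr (by nlinarith [hsep y hyx hVx hVy])
  calc √(V x * V y) * exp (-ε * znorm (x - y))
      ≤ M * (exp (-(ε / 2) * T) * exp (-(ε / 2) * znorm (x - y))) := by gcongr
    _ = _ := by ring

theorem stmt_11_general (d : ℕ) (V : (Fin d → ℤ) → ℝ)
    (hV : ∀ x, 0 ≤ V x) (hVbd : ∃ M, ∀ x, V x ≤ M)
    (hsparse : ∀ D : ℝ, ∃ r : ℝ, ∀ x y : Fin d → ℤ,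
      V x ≠ 0 → V y ≠ 0 → x ≠ y → r ≤ znorm x → r ≤ znorm y → D ≤ znorm (x - y)) :
    ∀ ε > (0 : ℝ), ∀ δ > (0 : ℝ), ∃ R : ℝ, ∀ x : Fin d → ℤ, R ≤ znorm x →
      (∑' y : Fin d → ℤ,
        if y = x then 0 else Real.sqrt (V x * V y) * Real.exp (-ε * znorm (x - y))) < δ := by
  obtain ⟨M, hM⟩ := hVbd
  intro ε hε δ hδ
  set C := ∑' z : Fin d → ℤ, exp (-(ε / 2) * znorm z)
  obtain ⟨T, hTδ, hT0⟩ : ∃ T, M * exp (-(ε / 2) * T) * C < δ ∧ 0 ≤ T := by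
    have hlim : Tendsto (fun T => M * exp (-(ε / 2) * T) * C) atTop (𝓝 0) := by
      simpa using ((tendsto_exp_atBot.comp
        (tendsto_id.const_mul_atTop_of_neg (by linarith : -(ε / 2) < 0))).const_mul M).mul_const C
    exact ((hlim.eventually (gt_mem_nhds hδ)).and (eventually_ge_atTop 0)).exists
  obtain ⟨r, hr⟩ := hsparse T
  refine ⟨r + T, fun x hx => ?_⟩
  have hbound := ite_sqrt_mul_exp_le hV hM hε.le fun y hyx hVx hVy =>
    le_znorm_sub_of_sparse hr hT0 hx hVx hVy hyx
  have hg := (hasSum_exp_neg_mul_znorm_sub (half_pos hε) x).mul_left (M * exp (-(ε / 2) * T))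
  have hnonneg : ∀ y, 0 ≤ if y = x then 0 else √(V x * V y) * exp (-ε * znorm (x - y)) :=
    fun y => by split_ifs <;> positivity
  calc _ ≤ ∑' y, M * exp (-(ε / 2) * T) * exp (-(ε / 2) * znorm (x - y)) :=
        Summable.tsum_le_tsum hbound (hg.summable.of_nonneg_of_le hnonneg hbound) hg.summable
    _ = M * exp (-(ε / 2) * T) * C := hg.tsum_eq
    _ < δ := hTδ

theorem stmt_11 (d : ℕ) (hd : 0 < d) (V : (Fin d → ℤ) → ℝ)
    (hV : ∀ x, 0 ≤ V x) (hVbd : ∃ M, ∀ x, V x ≤ M)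
    (hsparse : ∀ D : ℝ, ∃ r : ℝ, ∀ x y : Fin d → ℤ,
      V x ≠ 0 → V y ≠ 0 → x ≠ y → r ≤ znorm x → r ≤ znorm y → D ≤ znorm (x - y)) :
    ∀ ε > (0 : ℝ), ∀ δ > (0 : ℝ), ∃ R : ℝ, ∀ x : Fin d → ℤ, R ≤ znorm x →
      (∑' y : Fin d → ℤ,
        if y = x then 0 else Real.sqrt (V x * V y) * Real.exp (-ε * znorm (x - y))) < δ :=
  stmt_11_general d V hV hVbd hsparse
end

section
/- Let P be the transition operator of a symmetric, irreducible, finite-range random walk on ℤᵈ, V: ℤᵈ → [0,∞) bounded, P_V = (1+V)P, and for λ ∉ σ(P) let G_λ = (λ - P)^{-1} and G_{V,λ} = V^{1/2}(λG_λ - 1)V^{1/2}. Then λ ∈ ρ(P_V) if and only if 1 ∈ ρ(G_{V,λ}), and in that case (λ - P_V)^{-1} = G_λ + G_λ V^{1/2}(1 - G_{V,λ})^{-1} V^{1/2} P G_λ. -/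
open ContinuousLinearMap

/-- The Hilbert space `ℓ²(ℤᵈ; ℂ)`. -/
noncomputable abbrev L2Z (d : ℕ) := lp (fun _ : Fin d → ℤ => ℂ) 2

/-- `n`-fold convolution power of a transition probability on `ℤᵈ`. -/
noncomputable def convPow {d : ℕ} (p : (Fin d → ℤ) → ℝ) : ℕ → (Fin d → ℤ) → ℝ
  | 0 => fun x => if x = 0 then 1 else 0
  | n + 1 => fun x => ∑' y : Fin d → ℤ, p (x - y) * convPow p n y

/-- If `1 - a*b` is a unit, so is `1 - b*a`. -/
lemma aux_one_sub_swap_isUnit {R : Type*} [Ring R] {a b : R} (h : IsUnit (1 - a * b)) :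
    IsUnit (1 - b * a) := by
  obtain ⟨u, hu⟩ := h
  set c : R := ↑u⁻¹ with hc
  have h1 : (1 - a * b) * c = 1 := by rw [← hu, hc]; exact u.mul_inv
  have h2 : c * (1 - a * b) = 1 := by rw [← hu, hc]; exact u.inv_mul
  refine ⟨⟨1 - b * a, 1 + b * c * a, ?_, ?_⟩, rfl⟩
  · calc (1 - b * a) * (1 + b * c * a)
        = 1 - b * a + b * ((1 - a * b) * c) * a - 1 + 1 := by noncomm_ring
      _ = 1 := by rw [h1]; noncomm_ring
  · calc (1 + b * c * a) * (1 - b * a)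
        = 1 - b * a + b * (c * (1 - a * b)) * a - 1 + 1 := by noncomm_ring
      _ = 1 := by rw [h2]; noncomm_ring

lemma aux_ring_inverse_eq {R : Type*} [Ring R] {y x : R} (hy : IsUnit y) (hyx : y * x = 1) :
    Ring.inverse y = x := by
  calc Ring.inverse y = Ring.inverse y * (y * x) := by rw [hyx, mul_one]
    _ = Ring.inverse y * y * x := by rw [mul_assoc]
    _ = x := by rw [Ring.inverse_mul_cancel y hy, one_mul]

/-- Abstract Birman–Schwinger principle in a ring. -/
lemma aux_birman {R : Type*} [Ring R] (T G s q : R) (hTG : T * G = 1) (hGT : G * T = 1) :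
    (IsUnit (T - s * (s * q)) ↔ IsUnit (1 - s * (q * G) * s)) ∧
    (IsUnit (T - s * (s * q)) →
      Ring.inverse (T - s * (s * q)) =
        G + G * (s * (Ring.inverse (1 - s * (q * G) * s) * (s * (q * G))))) := by
  have hGunit : IsUnit G := ⟨⟨G, T, hGT, hTG⟩, rfl⟩
  have hTunit : IsUnit T := ⟨⟨T, G, hTG, hGT⟩, rfl⟩
  have key : T - s * (s * q) = T * (1 - (G * s) * (s * q)) := by
    have h : T * (1 - (G * s) * (s * q)) = T - (T * G) * (s * (s * q)) := by noncomm_ring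
    rw [h, hTG, one_mul]
  have hswap : (1 : R) - s * (q * G) * s = 1 - (s * q) * (G * s) := by noncomm_ring
  have hiff : IsUnit (T - s * (s * q)) ↔ IsUnit (1 - s * (q * G) * s) := by
    rw [key, hswap]
    constructor
    · intro h
      have h2 : G * (T * (1 - (G * s) * (s * q))) = (1 : R) - (G * s) * (s * q) := by
        rw [← mul_assoc, hGT, one_mul]
      have h3 : IsUnit ((1 : R) - (G * s) * (s * q)) := by
        rw [← h2]; exact hGunit.mul h
      exact aux_one_sub_swap_isUnit h3
    · intro h
      exact hTunit.mul (aux_one_sub_swap_isUnit h)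
  refine ⟨hiff, fun hU => ?_⟩
  have hBA : IsUnit ((1 : R) - s * (q * G) * s) := hiff.mp hU
  set c : R := Ring.inverse (1 - s * (q * G) * s) with hc
  have hc1 : ((1 : R) - (s * q) * (G * s)) * c = 1 := by
    rw [← hswap, hc]; exact Ring.mul_inverse_cancel _ hBA
  apply aux_ring_inverse_eq hU
  calc (T - s * (s * q)) * (G + G * (s * (c * (s * (q * G)))))
      = T * ((1 - (G * s) * (s * q)) * (1 + (G * s) * (c * (s * q)))) * G := by
        rw [key]; noncomm_ring
    _ = T * (1 - (G * s) * (s * q)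
          + (G * s) * ((((1 : R) - (s * q) * (G * s)) * c) * (s * q))) * G := by noncomm_ring
    _ = T * (1 : R) * G := by rw [hc1]; noncomm_ring
    _ = 1 := by rw [mul_one, hTG]

theorem stmt_14 (d : ℕ) (hd : 0 < d) (p : (Fin d → ℤ) → ℝ)
    (hnonneg : ∀ x, 0 ≤ p x) (hsum : HasSum p 1) (hsymm : ∀ x, p (-x) = p x)
    (hfin : (Function.support p).Finite)
    (hirr : ∀ x : Fin d → ℤ, ∃ n : ℕ, 0 < convPow p n x)
    (V : (Fin d → ℤ) → ℝ) (hV : ∀ x, 0 ≤ V x) (hVbd : ∃ M, ∀ x, V x ≤ M)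
    (P PV sqrtV : L2Z d →L[ℂ] L2Z d)
    (hP : ∀ (f : L2Z d) (x : Fin d → ℤ), P f x = ∑' y : Fin d → ℤ, (p (x - y) : ℂ) * f y)
    (hPV : ∀ (f : L2Z d) (x : Fin d → ℤ), PV f x = (1 + V x : ℝ) * P f x)
    (hsqrtV : ∀ (f : L2Z d) (x : Fin d → ℤ), sqrtV f x = (Real.sqrt (V x) : ℂ) * f x)
    (lam : ℝ) (hlam : (lam : ℂ) ∉ spectrum ℂ P)
    (Glam GVlam : L2Z d →L[ℂ] L2Z d)
    (hGlam : Glam = Ring.inverse ((lam : ℂ) • (1 : L2Z d →L[ℂ] L2Z d) - P))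
    (hGVlam : GVlam = sqrtV ∘L ((lam : ℂ) • Glam - 1) ∘L sqrtV) :
    ((lam : ℂ) ∈ resolventSet ℂ PV ↔ (1 : ℂ) ∈ resolventSet ℂ GVlam) ∧
    ((lam : ℂ) ∈ resolventSet ℂ PV →
      Ring.inverse ((lam : ℂ) • (1 : L2Z d →L[ℂ] L2Z d) - PV) =
        Glam + Glam ∘L sqrtV ∘L (Ring.inverse (1 - GVlam)) ∘L sqrtV ∘L P ∘L Glam) := by
  have hT : IsUnit ((lam : ℂ) • (1 : L2Z d →L[ℂ] L2Z d) - P) := by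
    rw [spectrum.notMem_iff, Algebra.algebraMap_eq_smul_one] at hlam
    exact hlam
  have hTG : ((lam : ℂ) • (1 : L2Z d →L[ℂ] L2Z d) - P) * Glam = 1 := by
    rw [hGlam]; exact Ring.mul_inverse_cancel _ hT
  have hGT : Glam * ((lam : ℂ) • (1 : L2Z d →L[ℂ] L2Z d) - P) = 1 := by
    rw [hGlam]; exact Ring.inverse_mul_cancel _ hT
  -- λ • Glam - 1 = P * Glam
  have hPG : (lam : ℂ) • Glam - 1 = P * Glam := by
    have h2 : ((lam : ℂ) • (1 : L2Z d →L[ℂ] L2Z d)) * Glam - P * Glam = 1 := by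
      rw [← sub_mul, hTG]
    rw [← h2, smul_mul_assoc, one_mul]
    abel
  -- PV = P + sqrtV * (sqrtV * P)
  have hW : PV = P + sqrtV * (sqrtV * P) := by
    ext f x
    have hs : ((Real.sqrt (V x) : ℂ)) * (Real.sqrt (V x) : ℂ) = ((V x : ℝ) : ℂ) := by
      norm_cast
      exact Real.mul_self_sqrt (hV x)
    have hadd : ((P + sqrtV * (sqrtV * P)) f : ∀ _ : Fin d → ℤ, ℂ) x
        = P f x + (sqrtV * (sqrtV * P)) f x := by
      rw [ContinuousLinearMap.add_apply, lp.coeFn_add, Pi.add_apply]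
    rw [hadd]
    have hmul : ((sqrtV * (sqrtV * P)) f : ∀ _ : Fin d → ℤ, ℂ) x
        = (Real.sqrt (V x) : ℂ) * ((Real.sqrt (V x) : ℂ) * P f x) := by
      show (sqrtV ((sqrtV * P) f)) x = _
      rw [hsqrtV]
      congr 1
      show (sqrtV (P f)) x = _
      rw [hsqrtV]
    rw [hmul, hPV, ← mul_assoc, hs]
    push_cast
    ring
  have hL : (lam : ℂ) • (1 : L2Z d →L[ℂ] L2Z d) - PV
      = ((lam : ℂ) • (1 : L2Z d →L[ℂ] L2Z d) - P) - sqrtV * (sqrtV * P) := by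
    rw [hW]; abel
  have hGVeq : GVlam = sqrtV * (P * Glam) * sqrtV := by
    rw [hGVlam, hPG]
    exact (mul_assoc sqrtV (P * Glam) sqrtV).symm
  obtain ⟨hiff, hform⟩ := aux_birman ((lam : ℂ) • (1 : L2Z d →L[ℂ] L2Z d) - P) Glam sqrtV P
    hTG hGT
  rw [← hGVeq] at hiff hform
  have hres1 : (lam : ℂ) ∈ resolventSet ℂ PV
      ↔ IsUnit ((lam : ℂ) • (1 : L2Z d →L[ℂ] L2Z d) - PV) := by
    rw [spectrum.mem_resolventSet_iff, Algebra.algebraMap_eq_smul_one]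
  have hres2 : (1 : ℂ) ∈ resolventSet ℂ GVlam ↔ IsUnit ((1 : L2Z d →L[ℂ] L2Z d) - GVlam) := by
    rw [spectrum.mem_resolventSet_iff, map_one]
  rw [hL] at hres1 ⊢
  refine ⟨hres1.trans (hiff.trans hres2.symm), fun hmem => ?_⟩
  rw [hform (hres1.mp hmem)]
  rfl
end

section
/- Let P be the transition operator of a symmetric, irreducible, finite-range random walk on ℤᵈ, V: ℤᵈ → [0,∞) bounded, λ ∉ σ(P) real, and G_{V,λ} = V^{1/2}(λG_λ - 1)V^{1/2} the modified Birman–Schwinger operator. Then λ ∈ σ_ess(P_V) if and only if 1 ∈ σ_ess(G_{V,λ}), where σ_ess is the Fredholm essential spectrum. -/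
open ContinuousLinearMap

/-!
Since `V ≥ 0` we may write `V = √V √V`, and as `λ - P` is invertible with inverse `G_λ`,
`λ - P_V = (λ - P) - √V √V P = (λ - P)(1 - A B)` with `A = G_λ √V` and `B = √V P`.
On the other side `B A = √V P G_λ √V = √V (λ G_λ - 1) √V = G_{V,λ}`.
Finally `1 - A B` and `1 - B A` are Fredholm together: `B` and `A` induce mutually inverse
isomorphisms between their kernels and between their cokernels, and in a Banach space an
operator with finite-dimensional cokernel has closed range.
-/

namespace LinearMap

variable {R M N : Type*} [Ring R] [AddCommGroup M] [Module R M] [AddCommGroup N] [Module R N]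
  (f : M →ₗ[R] N) (g : N →ₗ[R] M)

theorem mem_ker_one_sub_comp {x : M} : x ∈ ker (1 - g ∘ₗ f) ↔ g (f x) = x := by
  rw [mem_ker, sub_apply, Module.End.one_apply, comp_apply, sub_eq_zero, eq_comm]

theorem comp_one_sub_comp : f ∘ₗ (1 - g ∘ₗ f) = (1 - f ∘ₗ g) ∘ₗ f := by
  ext x; simp

theorem range_one_sub_comp_le_comap :
    range (1 - g ∘ₗ f) ≤ (range (1 - f ∘ₗ g)).comap f := by
  rw [← Submodule.map_le_iff_le_comap, ← range_comp, comp_one_sub_comp]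
  exact range_comp_le_range _ _

def kerOneSubCompEquiv : ker (1 - g ∘ₗ f) ≃ₗ[R] ker (1 - f ∘ₗ g) :=
  have hf : ∀ x ∈ ker (1 - g ∘ₗ f), f x ∈ ker (1 - f ∘ₗ g) := fun x hx => by
    rw [mem_ker_one_sub_comp] at hx ⊢; rw [hx]
  have hg : ∀ y ∈ ker (1 - f ∘ₗ g), g y ∈ ker (1 - g ∘ₗ f) := fun y hy => by
    rw [mem_ker_one_sub_comp] at hy ⊢; rw [hy]
  .ofLinearMap (f.restrict hf) (g.restrict hg)
    (by ext ⟨y, hy⟩; exact (mem_ker_one_sub_comp g f).mp hy)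
    (by ext ⟨x, hx⟩; exact (mem_ker_one_sub_comp f g).mp hx)

theorem mkQ_comp_comp_eq_mkQ :
    (range (1 - g ∘ₗ f)).mkQ ∘ₗ g ∘ₗ f = (range (1 - g ∘ₗ f)).mkQ := by
  ext x
  refine (Submodule.Quotient.eq _).mpr ⟨-x, ?_⟩
  simp [neg_add_eq_sub]

def quotRangeOneSubCompEquiv :
    (M ⧸ range (1 - g ∘ₗ f)) ≃ₗ[R] N ⧸ range (1 - f ∘ₗ g) :=
  .ofLinearMap (Submodule.mapQ _ _ f (range_one_sub_comp_le_comap f g))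
    (Submodule.mapQ _ _ g (range_one_sub_comp_le_comap g f))
    (Submodule.linearMap_qext _ <| by ext y; simpa using congr($(mkQ_comp_comp_eq_mkQ g f) y))
    (Submodule.linearMap_qext _ <| by ext x; simpa using congr($(mkQ_comp_comp_eq_mkQ f g) x))

end LinearMap

namespace ContinuousLinearMap

variable {𝕜 X Y : Type*} [NontriviallyNormedField 𝕜] [CompleteSpace 𝕜]
  [NormedAddCommGroup X] [NormedSpace 𝕜 X] [CompleteSpace X]
  [NormedAddCommGroup Y] [NormedSpace 𝕜 Y] [CompleteSpace Y]

/-- By the open mapping theorem, `(x, g) ↦ T x + g` is a quotient map from `X × G` onto `Y`, for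
`G` a (finite-dimensional, hence closed) algebraic complement of the range; the range of `T` is
the image of the closed set `X × {0}`, which is saturated. -/
theorem isClosed_range_of_finiteDimensional_quotient_s15 (T : X →L[𝕜] Y)
    [FiniteDimensional 𝕜 (Y ⧸ LinearMap.range (T : X →ₗ[𝕜] Y))] :
    IsClosed (LinearMap.range (T : X →ₗ[𝕜] Y) : Set Y) := by
  obtain ⟨G, hG⟩ := (LinearMap.range (T : X →ₗ[𝕜] Y)).exists_isCompl
  have : FiniteDimensional 𝕜 G :=
    Module.Finite.equiv (Submodule.quotientEquivOfIsCompl _ G hG)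
  have : CompleteSpace G := FiniteDimensional.complete 𝕜 G
  set S : X × G →L[𝕜] Y := T.coprod G.subtypeL
  have hS : Function.Surjective S := by
    have : LinearMap.range (S : X × G →ₗ[𝕜] Y) = ⊤ := by
      simpa [S, LinearMap.range_coprod] using hG.sup_eq_top
    exact LinearMap.range_eq_top.mp this
  have hpre : S ⁻¹' (LinearMap.range (T : X →ₗ[𝕜] Y)) = Set.univ ×ˢ {0} := by
    ext ⟨x, g⟩
    have hTx : T x ∈ LinearMap.range (T : X →ₗ[𝕜] Y) := ⟨x, rfl⟩
    change T x + (g : Y) ∈ LinearMap.range (T : X →ₗ[𝕜] Y) ↔ x ∈ Set.univ ∧ g = 0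
    rw [Submodule.add_mem_iff_right _ hTx]
    refine ⟨fun hg => ⟨trivial, ?_⟩, fun ⟨_, hg⟩ => hg ▸ zero_mem _⟩
    exact Subtype.ext (Submodule.disjoint_def.mp hG.disjoint g hg g.2)
  rw [← (S.isQuotientMap hS).isClosed_preimage, hpre]
  exact isClosed_univ.prod isClosed_singleton

end ContinuousLinearMap

section Fredholm

variable {X Y : Type*} [NormedAddCommGroup X] [NormedSpace ℂ X]
  [NormedAddCommGroup Y] [NormedSpace ℂ Y]

theorem ContinuousLinearMap.toLinearMap_one_sub_comp (A : Y →L[ℂ] X) (B : X →L[ℂ] Y) :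
    ((1 - A ∘L B : X →L[ℂ] X) : X →ₗ[ℂ] X) = 1 - (A : Y →ₗ[ℂ] X) ∘ₗ (B : X →ₗ[ℂ] Y) := by
  rw [toLinearMap_sub, toLinearMap_one, toLinearMap_comp]

theorem IsFredholm.one_sub_comp_comm [CompleteSpace Y] {A : Y →L[ℂ] X} {B : X →L[ℂ] Y}
    (h : _root_.IsFredholm (1 - A ∘L B)) : _root_.IsFredholm (1 - B ∘L A) := by
  obtain ⟨-, hker, hcoker⟩ := h
  rw [toLinearMap_one_sub_comp] at hker hcoker
  have : FiniteDimensional ℂ (Y ⧸ LinearMap.range ((1 - B ∘L A : Y →L[ℂ] Y) : Y →ₗ[ℂ] Y)) := by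
    rw [toLinearMap_one_sub_comp]
    exact .equiv (LinearMap.quotRangeOneSubCompEquiv _ _)
  refine ⟨isClosed_range_of_finiteDimensional_quotient_s15 _, ?_, this⟩
  rw [toLinearMap_one_sub_comp]
  exact .equiv (LinearMap.kerOneSubCompEquiv _ _)

theorem isFredholm_one_sub_comp_comm [CompleteSpace X] [CompleteSpace Y]
    (A : Y →L[ℂ] X) (B : X →L[ℂ] Y) :
    _root_.IsFredholm (1 - A ∘L B) ↔ _root_.IsFredholm (1 - B ∘L A) :=
  ⟨.one_sub_comp_comm, .one_sub_comp_comm⟩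

theorem IsUnit.isFredholm_comp_iff {U : X →L[ℂ] X} (hU : IsUnit U) (T : X →L[ℂ] X) :
    _root_.IsFredholm (U ∘L T) ↔ _root_.IsFredholm T := by
  obtain ⟨u, rfl⟩ := hU
  set e := ContinuousLinearEquiv.unitsEquiv ℂ X u
  have hker : LinearMap.ker ((↑u ∘L T : X →L[ℂ] X) : X →ₗ[ℂ] X) =
      LinearMap.ker (T : X →ₗ[ℂ] X) :=
    LinearMap.ker_comp_of_ker_eq_bot _ (LinearMap.ker_eq_bot.mpr e.injective)
  have hrange : LinearMap.range ((↑u ∘L T : X →L[ℂ] X) : X →ₗ[ℂ] X) =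
      (LinearMap.range (T : X →ₗ[ℂ] X)).map (e : X →ₗ[ℂ] X) :=
    LinearMap.range_comp _ _
  unfold _root_.IsFredholm
  rw [hker, hrange, Submodule.map_coe]
  exact and_congr e.toHomeomorph.isClosed_image <| and_congr .rfl <|
    Module.Finite.equiv_iff (Submodule.Quotient.equiv _ _ e.toLinearEquiv rfl).symm

end Fredholm

theorem stmt_15_general (d : ℕ)
    (V : (Fin d → ℤ) → ℝ) (hV : ∀ x, 0 ≤ V x)
    (P PV sqrtV : L2Z d →L[ℂ] L2Z d)
    (hPV : ∀ (f : L2Z d) (x : Fin d → ℤ), PV f x = (1 + V x : ℝ) * P f x)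
    (hsqrtV : ∀ (f : L2Z d) (x : Fin d → ℤ), sqrtV f x = (Real.sqrt (V x) : ℂ) * f x)
    (lam : ℝ) (hlam : (lam : ℂ) ∉ spectrum ℂ P)
    (Glam GVlam : L2Z d →L[ℂ] L2Z d)
    (hGlam : Glam = Ring.inverse ((lam : ℂ) • (1 : L2Z d →L[ℂ] L2Z d) - P))
    (hGVlam : GVlam = sqrtV ∘L ((lam : ℂ) • Glam - 1) ∘L sqrtV) :
    ¬ _root_.IsFredholm ((lam : ℂ) • (1 : L2Z d →L[ℂ] L2Z d) - PV) ↔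
      ¬ _root_.IsFredholm (1 - GVlam) := by
  have hunit : IsUnit ((lam : ℂ) • (1 : L2Z d →L[ℂ] L2Z d) - P) := by
    rwa [spectrum.notMem_iff, Algebra.algebraMap_eq_smul_one] at hlam
  have hGlam_inv : ((lam : ℂ) • 1 - P) * Glam = 1 := hGlam ▸ Ring.mul_inverse_cancel _ hunit
  have hPV_eq : PV = P + sqrtV * sqrtV * P := by
    refine ContinuousLinearMap.ext fun f => lp.ext (funext fun x => ?_)
    change PV f x = P f x + sqrtV (sqrtV (P f)) x
    rw [hPV, hsqrtV, hsqrtV, ← mul_assoc, ← Complex.ofReal_mul, Real.mul_self_sqrt (hV x)]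
    push_cast
    ring
  have hfactor : (lam : ℂ) • 1 - PV =
      ((lam : ℂ) • 1 - P) ∘L (1 - (Glam * sqrtV) ∘L (sqrtV * P)) := by
    simp only [← mul_def]
    rw [mul_sub, mul_one, ← mul_assoc, ← mul_assoc, ← mul_assoc, hGlam_inv, one_mul, hPV_eq]
    abel
  have hGV_eq : 1 - GVlam = 1 - (sqrtV * P) ∘L (Glam * sqrtV) := by
    have hPG : P * Glam = (lam : ℂ) • Glam - 1 := by
      rw [← hGlam_inv, sub_mul, smul_one_mul]; abel
    rw [hGVlam, ← hPG]
    rfl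
  rw [hfactor, hGV_eq, hunit.isFredholm_comp_iff, isFredholm_one_sub_comp_comm]

theorem stmt_15 (d : ℕ) (hd : 0 < d) (p : (Fin d → ℤ) → ℝ)
    (hnonneg : ∀ x, 0 ≤ p x) (hsum : HasSum p 1) (hsymm : ∀ x, p (-x) = p x)
    (hfin : (Function.support p).Finite)
    (hirr : ∀ x : Fin d → ℤ, ∃ n : ℕ, 0 < convPow p n x)
    (V : (Fin d → ℤ) → ℝ) (hV : ∀ x, 0 ≤ V x) (hVbd : ∃ M, ∀ x, V x ≤ M)
    (P PV sqrtV : L2Z d →L[ℂ] L2Z d)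
    (hP : ∀ (f : L2Z d) (x : Fin d → ℤ), P f x = ∑' y : Fin d → ℤ, (p (x - y) : ℂ) * f y)
    (hPV : ∀ (f : L2Z d) (x : Fin d → ℤ), PV f x = (1 + V x : ℝ) * P f x)
    (hsqrtV : ∀ (f : L2Z d) (x : Fin d → ℤ), sqrtV f x = (Real.sqrt (V x) : ℂ) * f x)
    (lam : ℝ) (hlam : (lam : ℂ) ∉ spectrum ℂ P)
    (Glam GVlam : L2Z d →L[ℂ] L2Z d)
    (hGlam : Glam = Ring.inverse ((lam : ℂ) • (1 : L2Z d →L[ℂ] L2Z d) - P))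
    (hGVlam : GVlam = sqrtV ∘L ((lam : ℂ) • Glam - 1) ∘L sqrtV) :
    ¬ _root_.IsFredholm ((lam : ℂ) • (1 : L2Z d →L[ℂ] L2Z d) - PV) ↔
      ¬ _root_.IsFredholm (1 - GVlam) :=
  stmt_15_general d V hV P PV sqrtV hPV hsqrtV lam hlam Glam GVlam hGlam hGVlam
end
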